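/- Let d ≥ 2, let ψ ∈ ℂ^d be the GHZ-type unit vector with ψ_0 = ψ_{d−1} = 1/√2 and all other entries 0, let 0 ≤ η ≤ 1, and let ρ_η = (1−η)·ψψ† + (η/d)·I be the noisy GHZ state. Then the robustness of coherence satisfies C_R(ρ_η) = 1 − η. -/

import Mathlib

open Matrix BigOperators
open scoped ComplexOrder Classical

/-- A density matrix: positive semidefinite with trace 1. -/
def IsDensityMatrix {d : ℕ} (ρ : Matrix (Fin d) (Fin d) ℂ) : Prop :=
  ρ.PosSemidef ∧ ρ.trace = 1

/-- The robustness of coherence: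
`C_R(ρ) = inf {s ≥ 0 : ∃ density matrix τ with (ρ + s·τ)/(1+s) diagonal}`. -/
noncomputable def CR {d : ℕ} (ρ : Matrix (Fin d) (Fin d) ℂ) : ℝ :=
  sInf {s : ℝ | 0 ≤ s ∧ ∃ τ : Matrix (Fin d) (Fin d) ℂ, IsDensityMatrix τ ∧
    (((1 + s : ℝ) : ℂ)⁻¹ • (ρ + ((s : ℝ) : ℂ) • τ)).IsDiag}

lemma sum_eq_pair {d : ℕ} {M : Type*} [AddCommMonoid M] {i0 i1 : Fin d} (h : i0 ≠ i1)
    (f : Fin d → M) (hf : ∀ i, i ≠ i0 → i ≠ i1 → f i = 0) : ∑ i, f i = f i0 + f i1 := by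
  rw [← Finset.sum_pair h]
  refine (Finset.sum_subset (Finset.subset_univ _) (fun x _ hx => ?_)).symm
  simp only [Finset.mem_insert, Finset.mem_singleton, not_or] at hx
  exact hf x hx.1 hx.2

lemma psd_rank_one {d : ℕ} (v : Fin d → ℂ) : (vecMulVec v (star v)).PosSemidef := by
  refine posSemidef_iff_dotProduct_mulVec.mpr ⟨?_, ?_⟩
  · apply Matrix.IsHermitian.ext
    intro i j
    simp [vecMulVec_apply, mul_comm]
  · intro x
    have key : star x ⬝ᵥ ((vecMulVec v (star v)) *ᵥ x)
        = star (star v ⬝ᵥ x) * (star v ⬝ᵥ x) := by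
      simp only [dotProduct, mulVec, vecMulVec_apply, Pi.star_apply, star_sum, StarMul.star_mul,
        star_star, Finset.mul_sum, Finset.sum_mul]
      rw [Finset.sum_comm]
      refine Finset.sum_congr rfl fun i _ => Finset.sum_congr rfl fun j _ => ?_
      ring
    rw [key]
    exact star_mul_self_nonneg _

/-- For the noisy GHZ state `ρ_η = (1−η)·ψψ† + (η/d)·I`, where `ψ` is the GHZ-type unit
vector with `ψ_0 = ψ_{d−1} = 1/√2` and all other entries `0`, the robustness of coherence
satisfies `C_R(ρ_η) = 1 − η`. -/
theorem noisy_ghz_robustness (d : ℕ) (hd : 2 ≤ d) (ψ : Fin d → ℂ)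
    (h0 : ψ ⟨0, by omega⟩ = 1 / (Real.sqrt 2 : ℂ))
    (h1 : ψ ⟨d - 1, by omega⟩ = 1 / (Real.sqrt 2 : ℂ))
    (hz : ∀ i : Fin d, i ≠ ⟨0, by omega⟩ → i ≠ ⟨d - 1, by omega⟩ → ψ i = 0)
    (η : ℝ) (hη0 : 0 ≤ η) (hη1 : η ≤ 1) :
    CR (((1 - η : ℝ) : ℂ) • Matrix.vecMulVec ψ (star ψ) +
        ((η / d : ℝ) : ℂ) • (1 : Matrix (Fin d) (Fin d) ℂ)) = 1 - η := by
  set i0 : Fin d := ⟨0, by omega⟩ with hi0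
  set i1 : Fin d := ⟨d - 1, by omega⟩ with hi1
  have hne : i0 ≠ i1 := by
    intro h
    have := congrArg Fin.val h
    simp only [hi0, hi1] at this
    omega
  set ρ : Matrix (Fin d) (Fin d) ℂ :=
    ((1 - η : ℝ) : ℂ) • Matrix.vecMulVec ψ (star ψ) +
      ((η / d : ℝ) : ℂ) • (1 : Matrix (Fin d) (Fin d) ℂ) with hρ
  have hρ_apply : ∀ i j : Fin d, ρ i j =
      ((1 - η : ℝ) : ℂ) * (ψ i * star (ψ j)) + ((η / d : ℝ) : ℂ) * (if i = j then 1 else 0) := by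
    intro i j
    simp [hρ, Matrix.add_apply, Matrix.smul_apply, vecMulVec_apply, Matrix.one_apply,
      smul_eq_mul]
  have hconj : star (1 / (Real.sqrt 2 : ℂ)) = 1 / (Real.sqrt 2 : ℂ) := by
    simp [Complex.star_def, map_div₀, Complex.conj_ofReal]
  have hhalf : (1 / (Real.sqrt 2 : ℂ)) * (1 / (Real.sqrt 2 : ℂ)) = 1 / 2 := by
    rw [div_mul_div_comm, one_mul, ← Complex.ofReal_mul,
      Real.mul_self_sqrt (by norm_num : (0:ℝ) ≤ 2)]
    norm_num
  -- the set
  set S : Set ℝ := {s : ℝ | 0 ≤ s ∧ ∃ τ : Matrix (Fin d) (Fin d) ℂ, IsDensityMatrix τ ∧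
    (((1 + s : ℝ) : ℂ)⁻¹ • (ρ + ((s : ℝ) : ℂ) • τ)).IsDiag} with hS
  have hCR : CR ρ = sInf S := rfl
  -- the witness vector
  set φ : Fin d → ℂ := fun i =>
    if i = i0 then 1 / (Real.sqrt 2 : ℂ) else if i = i1 then -(1 / (Real.sqrt 2 : ℂ)) else 0
    with hφ
  have e0 : φ i0 = 1 / (Real.sqrt 2 : ℂ) := by simp [hφ]
  have e1 : φ i1 = -(1 / (Real.sqrt 2 : ℂ)) := by simp [hφ, hne.symm]
  have ez : ∀ i : Fin d, i ≠ i0 → i ≠ i1 → φ i = 0 := by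
    intro i hi hi'; simp [hφ, hi, hi']
  have hmem : (1 - η) ∈ S := by
    refine ⟨by linarith, vecMulVec φ (star φ), ⟨psd_rank_one φ, ?_⟩, ?_⟩
    · -- trace 1
      rw [Matrix.trace, sum_eq_pair hne]
      · simp only [Matrix.diag_apply, vecMulVec_apply, Pi.star_apply, e0, e1, star_neg,
          neg_mul_neg, hconj, hhalf]
        norm_num
      · intro i hi hi'
        simp [Matrix.diag_apply, vecMulVec_apply, ez i hi hi']
    · -- diagonal
      intro i j hij
      have key : ψ i * star (ψ j) + φ i * star (φ j) = 0 := by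
        by_cases hI0 : i = i0
        · by_cases hJ1 : j = i1
          · subst hI0; subst hJ1
            rw [h0, h1, e0, e1, star_neg, hconj, hhalf, mul_neg, hhalf]
            ring
          · have hJ0 : j ≠ i0 := by rw [hI0] at hij; exact fun h => hij h.symm
            rw [hz j hJ0 hJ1, ez j hJ0 hJ1]
            simp
        · by_cases hI1 : i = i1
          · by_cases hJ0 : j = i0
            · subst hI1; subst hJ0
              rw [h0, h1, e0, e1, hconj, hhalf, neg_mul, hhalf]
              ring
            · have hJ1 : j ≠ i1 := by rw [hI1] at hij; exact fun h => hij h.symm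
              rw [hz j hJ0 hJ1, ez j hJ0 hJ1]
              simp
          · rw [hz i hI0 hI1, ez i hI0 hI1]
            simp
      have hinner : ρ i j + ((1 - η : ℝ) : ℂ) * (vecMulVec φ (star φ)) i j = 0 := by
        rw [hρ_apply i j, if_neg hij, mul_zero, add_zero, vecMulVec_apply, Pi.star_apply,
          ← mul_add, key, mul_zero]
      simp only [Matrix.smul_apply, Matrix.add_apply, smul_eq_mul]
      rw [hinner, mul_zero]
  rw [hCR]
  refine le_antisymm (csInf_le ⟨0, fun t ht => ht.1⟩ hmem) (le_csInf ⟨_, hmem⟩ ?_)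
  rintro s ⟨hs0, τ, ⟨hpsd, htr⟩, hdiag⟩
  -- diagonal entries: nonneg real
  have hdiagnn : ∀ i : Fin d, 0 ≤ (τ i i).re ∧ (τ i i).im = 0 := by
    intro i
    have hv : star (Pi.single i 1) ⬝ᵥ (τ *ᵥ Pi.single i 1) = τ i i := by
      simp [dotProduct, mulVec, Pi.single_apply, apply_ite (star : ℂ → ℂ)]
    have := hpsd.dotProduct_mulVec_nonneg (Pi.single i 1)
    rw [hv] at this
    exact ⟨by simpa using (Complex.le_def.mp this).1, by simpa using (Complex.le_def.mp this).2.symm⟩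
  set a : ℝ := (τ i0 i0).re with ha
  set b : ℝ := (τ i1 i1).re with hb
  have htrre : ∑ i : Fin d, (τ i i).re = 1 := by
    have := congrArg Complex.re htr
    simpa [Matrix.trace, Matrix.diag_apply, Complex.re_sum] using this
  have hab1 : a + b ≤ 1 := by
    have hsub := Finset.sum_le_sum_of_subset_of_nonneg
      (Finset.subset_univ ({i0, i1} : Finset (Fin d)))
      (fun i _ _ => (hdiagnn i).1)
    rw [Finset.sum_pair hne, htrre] at hsub
    exact hsub
  -- off-diagonal condition
  have h1s : ((1 + s : ℝ) : ℂ) ≠ 0 := by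
    rw [Complex.ofReal_ne_zero]; positivity
  have hoffc := hdiag hne
  simp only [Matrix.smul_apply, Matrix.add_apply, smul_eq_mul] at hoffc
  rw [mul_eq_zero] at hoffc
  have hoff : ρ i0 i1 + ((s : ℝ) : ℂ) * τ i0 i1 = 0 := by
    rcases hoffc with h | h
    · exact absurd h (inv_ne_zero h1s)
    · exact h
  have hρ01 : ρ i0 i1 = (((1 - η) / 2 : ℝ) : ℂ) := by
    rw [hρ_apply, if_neg hne, mul_zero, add_zero, h0, h1, hconj, hhalf]
    push_cast
    ring
  have hstau : ((s : ℝ) : ℂ) * τ i0 i1 = -(((1 - η) / 2 : ℝ) : ℂ) := by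
    rw [hρ01] at hoff; linear_combination hoff
  have habs : s * ‖τ i0 i1‖ = (1 - η) / 2 := by
    have h := congrArg norm hstau
    rw [norm_mul, ← Complex.ofReal_neg, Complex.norm_real, Real.norm_eq_abs, Complex.norm_real, Real.norm_eq_abs,
      abs_of_nonneg hs0, abs_neg,
      abs_of_nonneg (by linarith : (0:ℝ) ≤ (1 - η) / 2)] at h
    exact h
  by_cases hczero : τ i0 i1 = 0
  · rw [hczero] at habs
    simp at habs
    linarith
  · set t : ℂ := τ i0 i1 with ht
    set c : ℝ := ‖t‖ with hc
    have hcpos : 0 < c := by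
      rw [hc]; exact (norm_pos_iff.mpr hczero)
    -- test vector
    set x : Fin d → ℂ := fun i =>
      if i = i0 then ((c : ℝ) : ℂ) else if i = i1 then -(star t) else 0 with hx
    have x0 : x i0 = ((c : ℝ) : ℂ) := by simp [hx]
    have x1 : x i1 = -(star t) := by simp [hx, hne.symm]
    have xz : ∀ i : Fin d, i ≠ i0 → i ≠ i1 → x i = 0 := by
      intro i hi hi'; simp [hx, hi, hi']
    have hτ10 : τ i1 i0 = star t := by
      have := hpsd.1.apply i0 i1
      rw [← ht] at this
      rw [← this, star_star]
    have hQ : star x ⬝ᵥ (τ *ᵥ x)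
        = star (x i0) * (τ i0 i0 * x i0 + τ i0 i1 * x i1)
        + star (x i1) * (τ i1 i0 * x i0 + τ i1 i1 * x i1) := by
      rw [dotProduct, sum_eq_pair hne]
      · have m0 : (τ *ᵥ x) i0 = τ i0 i0 * x i0 + τ i0 i1 * x i1 := by
          rw [mulVec, dotProduct, sum_eq_pair hne]
          intro j hj hj'; rw [xz j hj hj', mul_zero]
        have m1 : (τ *ᵥ x) i1 = τ i1 i0 * x i0 + τ i1 i1 * x i1 := by
          rw [mulVec, dotProduct, sum_eq_pair hne]
          intro j hj hj'; rw [xz j hj hj', mul_zero]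
        rw [Pi.star_apply, Pi.star_apply, m0, m1]
      · intro i hi hi'
        rw [Pi.star_apply, xz i hi hi', star_zero, zero_mul]
    have htt : t * star t = ((c^2 : ℝ) : ℂ) := by
      rw [Complex.star_def, Complex.mul_conj]
      norm_cast
      rw [hc, Complex.sq_norm]
    have hQval : star x ⬝ᵥ (τ *ᵥ x)
        = ((c^2 : ℝ) : ℂ) * (τ i0 i0 + τ i1 i1) - 2 * ((c^3 : ℝ) : ℂ) := by
      rw [hQ, x0, x1, hτ10, star_neg, star_star]
      have h1 : star (((c:ℝ):ℂ)) = ((c:ℝ):ℂ) := by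
        rw [Complex.star_def, Complex.conj_ofReal]
      rw [h1]
      have htt' : t * star t = ((c:ℝ):ℂ)^2 := by rw [htt]; push_cast; ring
      push_cast
      linear_combination (τ i1 i1 - 2*((c:ℝ):ℂ)) * htt'
    have hQpos := hpsd.dotProduct_mulVec_nonneg x
    rw [hQval] at hQpos
    have hre := (Complex.le_def.mp hQpos).1
    have haim : (τ i0 i0).im = 0 := (hdiagnn i0).2
    have hbim : (τ i1 i1).im = 0 := (hdiagnn i1).2
    have hrere : (0:ℝ) ≤ c^2 * (a + b) - 2 * c^3 := by
      have : (((c^2 : ℝ) : ℂ) * (τ i0 i0 + τ i1 i1) - 2 * ((c^3 : ℝ) : ℂ)).re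
          = c^2 * (a + b) - 2 * c^3 := by
        simp only [Complex.sub_re, Complex.mul_re, Complex.add_re, Complex.add_im,
          Complex.ofReal_re, Complex.ofReal_im, Complex.re_ofNat, Complex.im_ofNat,
          haim, hbim, zero_mul, mul_zero, sub_zero, add_zero, ← ha, ← hb]
        try ring
      rw [this] at hre
      simpa using hre
    have h2c : 2 * c ≤ 1 := by
      nlinarith [mul_pos hcpos hcpos, sq_nonneg c]
    nlinarith [habs, mul_nonneg hs0 hcpos.le]
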